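/- (Proposition 1, optimal selection with homogeneous variance.) Define t₁* = inf{t ∈ ℝ : F(t) ≤ γ R(t)} and t₂* = inf{t ∈ ℝ : R(t) ≤ α}. Then t₁* and t₂* are finite, and the threshold t* = max(t₁*, t₂*) satisfies both constraints: F(t*) ≤ γ R(t*) and R(t*) ≤ α. Moreover t* is optimal among all thresholds: for every t ∈ ℝ satisfying F(t) ≤ γ R(t) and R(t) ≤ α, one has B(t) ≤ B(t*); that is, the rule selecting {Y ≥ t*} maximizes the probability of true discoveries among all threshold rules meeting the capacity constraint at level α and the marginal false discovery rate constraint at level γ. -/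

import Mathlib

open MeasureTheory ProbabilityTheory Filter Set

/-- The standard normal density. -/
noncomputable def stdGauss (x : ℝ) : ℝ := (Real.sqrt (2 * Real.pi))⁻¹ * Real.exp (-(x ^ 2) / 2)

/-- The standard normal distribution function. -/
noncomputable def stdPhi (t : ℝ) : ℝ := ∫ x in Set.Iic t, stdGauss x

/-- The standard normal survival function. -/
noncomputable def Psi (x : ℝ) : ℝ := ∫ u in Set.Ioi x, stdGauss u

lemma stdGauss_pos (x : ℝ) : 0 < stdGauss x := by
  have h : 0 < Real.sqrt (2 * Real.pi) := Real.sqrt_pos.2 (by positivity)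
  exact mul_pos (inv_pos.2 h) (Real.exp_pos _)

lemma stdGauss_cont : Continuous stdGauss := by
  unfold stdGauss; fun_prop

lemma stdGauss_le (x : ℝ) : stdGauss x ≤ (Real.sqrt (2 * Real.pi))⁻¹ := by
  have h : Real.exp (-(x ^ 2) / 2) ≤ 1 := by
    rw [Real.exp_le_one_iff]; nlinarith [sq_nonneg x]
  have h0 : (0:ℝ) ≤ (Real.sqrt (2 * Real.pi))⁻¹ := by positivity
  calc stdGauss x ≤ (Real.sqrt (2 * Real.pi))⁻¹ * 1 := mul_le_mul_of_nonneg_left h h0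
  _ = _ := mul_one _

lemma integrable_stdGauss : Integrable stdGauss := by
  have : Integrable (fun x : ℝ => Real.exp (-(1/2) * x ^ 2)) :=
    integrable_exp_neg_mul_sq (by norm_num)
  have h := this.const_mul (Real.sqrt (2 * Real.pi))⁻¹
  refine h.congr (Eventually.of_forall fun x => ?_)
  unfold stdGauss; ring_nf

lemma integral_stdGauss : ∫ x, stdGauss x = 1 := by
  have h := integral_gaussian (1/2 : ℝ)
  have h2 : ∫ x : ℝ, Real.exp (-(1/2) * x ^ 2) = Real.sqrt (2 * Real.pi) := by
    rw [h]; congr 1; field_simp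
  have : ∫ x, stdGauss x = (Real.sqrt (2 * Real.pi))⁻¹ * ∫ x : ℝ, Real.exp (-(1/2) * x ^ 2) := by
    rw [← MeasureTheory.integral_const_mul]; congr 1 with x; unfold stdGauss; ring_nf
  rw [this, h2]
  field_simp

lemma stdPhi_add_Psi (t : ℝ) : stdPhi t + Psi t = 1 := by
  rw [stdPhi, Psi, ← integral_stdGauss]
  rw [← setIntegral_union (Iic_disjoint_Ioi le_rfl) measurableSet_Ioi
    integrable_stdGauss.integrableOn integrable_stdGauss.integrableOn,
    Iic_union_Ioi, setIntegral_univ]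

lemma one_sub_stdPhi (t : ℝ) : 1 - stdPhi t = Psi t := by
  have := stdPhi_add_Psi t; linarith

lemma Psi_pos (x : ℝ) : 0 < Psi x := by
  rw [Psi]
  apply setIntegral_pos_iff_support_of_nonneg_ae (Eventually.of_forall fun u => (stdGauss_pos u).le)
    integrable_stdGauss.integrableOn |>.2
  · have : (Function.support stdGauss) = univ := by
      ext u; simp [Function.support, (stdGauss_pos u).ne']
    rw [this, univ_inter]
    simp [Real.volume_Ioi]

lemma Psi_split (s t : ℝ) (hst : s ≤ t) :
    Psi s = (∫ u in Ioc s t, stdGauss u) + Psi t := by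
  rw [Psi, Psi, ← setIntegral_union (Ioc_disjoint_Ioi le_rfl) measurableSet_Ioi
    integrable_stdGauss.integrableOn integrable_stdGauss.integrableOn, Ioc_union_Ioi_eq_Ioi hst]

lemma Psi_antitone : Antitone Psi := by
  intro s t hst
  have h1 := Psi_split s t hst
  have : 0 ≤ ∫ u in Ioc s t, stdGauss u :=
    setIntegral_nonneg measurableSet_Ioc fun u _ => (stdGauss_pos u).le
  linarith

lemma Psi_diff_le (s t : ℝ) (hst : s ≤ t) :
    Psi s - Psi t ≤ (Real.sqrt (2 * Real.pi))⁻¹ * (t - s) := by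
  have h1 := Psi_split s t hst
  have h2 : (∫ u in Ioc s t, stdGauss u) ≤ ∫ u in Ioc s t, (Real.sqrt (2 * Real.pi))⁻¹ :=
    setIntegral_mono_on integrable_stdGauss.integrableOn (integrableOn_const (by simp))
      measurableSet_Ioc fun u _ => stdGauss_le u
  rw [setIntegral_const] at h2
  simp only [measureReal_def, Real.volume_Ioc, ENNReal.toReal_ofReal (by linarith : (0:ℝ) ≤ t - s)] at h2
  rw [smul_eq_mul] at h2
  linarith [h1, h2, mul_comm ((Real.sqrt (2 * Real.pi))⁻¹) (t - s)]

lemma Psi_le_one (x : ℝ) : Psi x ≤ 1 := by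
  have h : 0 ≤ stdPhi x := setIntegral_nonneg measurableSet_Iic fun u _ => (stdGauss_pos u).le
  linarith [stdPhi_add_Psi x]

lemma Psi_neg (x : ℝ) : Psi (-x) = stdPhi x := by
  rw [Psi, stdPhi]
  rw [← integral_comp_neg_Iic]
  congr 1 with u
  unfold stdGauss; ring_nf

lemma Psi_lipschitz (a b : ℝ) : |Psi a - Psi b| ≤ (Real.sqrt (2 * Real.pi))⁻¹ * |a - b| := by
  rcases le_total a b with h | h
  · rw [abs_of_nonneg (by linarith [Psi_antitone h]), abs_of_nonpos (by linarith)]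
    have := Psi_diff_le a b h; linarith
  · rw [abs_of_nonpos (by linarith [Psi_antitone h]), abs_of_nonneg (by linarith)]
    have := Psi_diff_le b a h; linarith

lemma Psi_continuous : Continuous Psi := by
  apply LipschitzWith.continuous (K := Real.toNNReal (Real.sqrt (2 * Real.pi))⁻¹)
  apply LipschitzWith.of_dist_le_mul
  intro a b
  rw [Real.dist_eq, Real.dist_eq]
  have := Psi_lipschitz a b
  rwa [Real.coe_toNNReal _ (by positivity)]

lemma stdGauss_shift (u d : ℝ) :
    stdGauss (u + d) = stdGauss u * Real.exp (-(u * d) - d ^ 2 / 2) := by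
  unfold stdGauss
  rw [mul_assoc, ← Real.exp_add]
  congr 1; ring

lemma integral_shift (x d : ℝ) : (∫ u in Ioi x, stdGauss (u + d)) = Psi (x + d) := by
  rw [Psi]
  have : (∫ u in Ioi x, stdGauss (u + d)) = ∫ u : ℝ, (Ioi (x + d)).indicator stdGauss (u + d) := by
    rw [← integral_indicator measurableSet_Ioi]
    congr 1 with u
    by_cases h : u ∈ Ioi x
    · rw [indicator_of_mem h,
        indicator_of_mem (by simpa using add_lt_add_right h.out d : u + d ∈ Ioi (x + d))]
    · rw [indicator_of_notMem h, indicator_of_notMem (by simp at h ⊢; linarith)]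
  rw [this, integral_add_right_eq_self, integral_indicator measurableSet_Ioi]

lemma Psi_shift_le {x d : ℝ} (hd : 0 ≤ d) :
    Psi (x + d) ≤ Real.exp (-(x * d) - d ^ 2 / 2) * Psi x := by
  rw [← integral_shift, Psi, ← integral_const_mul]
  apply setIntegral_mono_on
  · exact (integrable_stdGauss.comp_add_right d).integrableOn
  · exact (integrable_stdGauss.const_mul _).integrableOn
  · exact measurableSet_Ioi
  · intro u hu
    rw [stdGauss_shift, mul_comm (stdGauss u)]
    apply mul_le_mul_of_nonneg_right _ (stdGauss_pos u).le
    apply Real.exp_le_exp.2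
    have : x * d ≤ u * d := mul_le_mul_of_nonneg_right hu.out.le hd
    linarith

lemma Ioc_shift_ge {x x' d : ℝ} (hd : 0 ≤ d) :
    Real.exp (-(x' * d) - d ^ 2 / 2) * (∫ u in Ioc x x', stdGauss u) ≤
      ∫ u in Ioc x x', stdGauss (u + d) := by
  rw [← integral_const_mul]
  apply setIntegral_mono_on
  · exact (integrable_stdGauss.const_mul _).integrableOn
  · exact (integrable_stdGauss.comp_add_right d).integrableOn
  · exact measurableSet_Ioc
  · intro u hu
    rw [stdGauss_shift, mul_comm (stdGauss u)]
    apply mul_le_mul_of_nonneg_right _ (stdGauss_pos u).le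
    apply Real.exp_le_exp.2
    have : u * d ≤ x' * d := mul_le_mul_of_nonneg_right hu.2 hd
    linarith

lemma Psi_shift_split (x x' d : ℝ) (h : x ≤ x') :
    Psi (x + d) = (∫ u in Ioc x x', stdGauss (u + d)) + Psi (x' + d) := by
  have he : (∫ u in Ioc x x', stdGauss (u + d)) = ∫ u in Ioc (x + d) (x' + d), stdGauss u := by
    rw [← intervalIntegral.integral_of_le h,
      ← intervalIntegral.integral_of_le (by linarith : x + d ≤ x' + d),
      intervalIntegral.integral_comp_add_right]
  rw [he]
  exact Psi_split (x + d) (x' + d) (by linarith)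

lemma Psi_TP2 {x x' d : ℝ} (hx : x ≤ x') (hd : 0 ≤ d) :
    Psi (x' + d) * Psi x ≤ Psi (x + d) * Psi x' := by
  set k := Real.exp (-(x' * d) - d ^ 2 / 2) with hk
  have h1 : Psi (x' + d) ≤ k * Psi x' := Psi_shift_le hd
  have h2 : Psi (x + d) ≥ k * (Psi x - Psi x') + Psi (x' + d) := by
    have hs := Psi_shift_split x x' d hx
    have hg := Ioc_shift_ge (x := x) (x' := x') hd
    have hI : (∫ u in Ioc x x', stdGauss u) = Psi x - Psi x' := by
      have := Psi_split x x' hx; linarith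
    rw [hI] at hg
    linarith
  have h3 : Psi x' ≤ Psi x := Psi_antitone hx
  nlinarith [Psi_pos x', (Psi_pos (x' + d)).le]

lemma Psi_le_exp {x : ℝ} (hx : 0 ≤ x) : Psi x ≤ Real.exp (-(x ^ 2) / 4) := by
  have h := Psi_shift_le (x := x / 2) (d := x / 2) (by linarith)
  have h2 : x / 2 + x / 2 = x := by ring
  rw [h2] at h
  calc Psi x ≤ Real.exp (-(x / 2 * (x / 2)) - (x / 2) ^ 2 / 2) * Psi (x / 2) := h
    _ ≤ Real.exp (-(x ^ 2) / 4) * 1 := by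
        apply mul_le_mul (Real.exp_le_exp.2 (by nlinarith [sq_nonneg x])) (Psi_le_one _)
          (Psi_pos _).le (Real.exp_pos _).le
    _ = Real.exp (-(x ^ 2) / 4) := mul_one _

lemma Psi_tendsto_atTop : Tendsto Psi atTop (nhds 0) := by
  apply squeeze_zero' (Eventually.of_forall fun x => (Psi_pos x).le)
    (eventually_atTop.2 ⟨0, fun x hx => Psi_le_exp hx⟩)
  have : Tendsto (fun x : ℝ => -(x ^ 2) / 4) atTop atBot := by
    apply Tendsto.atBot_div_const (by norm_num)
    exact tendsto_neg_atBot_iff.2 (tendsto_pow_atTop (by norm_num))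
  exact Real.tendsto_exp_atBot.comp this

lemma stdPhi_tendsto_atBot : Tendsto stdPhi atBot (nhds 0) := by
  have : stdPhi = fun t => Psi (-t) := by funext t; rw [Psi_neg]
  rw [this]
  exact Psi_tendsto_atTop.comp tendsto_neg_atBot_atTop

lemma Psi_tendsto_atBot : Tendsto Psi atBot (nhds 1) := by
  have : Psi = fun t => 1 - stdPhi t := by funext t; linarith [stdPhi_add_Psi t]
  rw [this]
  simpa using (tendsto_const_nhds (x := (1:ℝ)) (f := atBot)).sub stdPhi_tendsto_atBot

section Aux

variable {G : Measure ℝ} [IsFiniteMeasure G] {σ : ℝ}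

lemma psi_integrable (hσ : 0 < σ) (t : ℝ) :
    Integrable (fun θ => Psi ((t - θ) / σ)) G := by
  apply Integrable.mono' (integrable_const (1:ℝ))
  · exact (Psi_continuous.comp (by fun_prop)).aestronglyMeasurable
  · refine ae_of_all _ fun θ => ?_
    rw [Real.norm_eq_abs, abs_of_pos (Psi_pos _)]; exact Psi_le_one _

lemma psi_integral_antitone (hσ : 0 < σ) (s : Set ℝ) :
    Antitone (fun t => ∫ θ in s, Psi ((t - θ) / σ) ∂G) := by
  intro a b hab
  apply setIntegral_mono ((psi_integrable hσ b).integrableOn) ((psi_integrable hσ a).integrableOn)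
  intro θ
  exact Psi_antitone (by gcongr <;> linarith)

lemma psi_integral_continuous (hσ : 0 < σ) (s : Set ℝ) :
    Continuous (fun t => ∫ θ in s, Psi ((t - θ) / σ) ∂G) := by
  set C : ℝ := (Real.sqrt (2 * Real.pi))⁻¹ with hC
  have hC0 : 0 ≤ C := by positivity
  set K : ℝ := C / σ * (G univ).toReal with hK
  have hK0 : 0 ≤ K := by positivity
  apply LipschitzWith.continuous (K := Real.toNNReal K)
  apply LipschitzWith.of_dist_le_mul
  intro a b
  rw [Real.dist_eq, Real.dist_eq, Real.coe_toNNReal _ hK0]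
  have h1 : (∫ θ in s, Psi ((a - θ) / σ) ∂G) - (∫ θ in s, Psi ((b - θ) / σ) ∂G)
      = ∫ θ in s, (Psi ((a - θ) / σ) - Psi ((b - θ) / σ)) ∂G := by
    rw [integral_sub ((psi_integrable hσ a).integrableOn) ((psi_integrable hσ b).integrableOn)]
  rw [h1]
  calc |∫ θ in s, (Psi ((a - θ) / σ) - Psi ((b - θ) / σ)) ∂G|
      ≤ ∫ θ in s, |Psi ((a - θ) / σ) - Psi ((b - θ) / σ)| ∂G := by
        simpa [Real.norm_eq_abs] using
          norm_integral_le_integral_norm (μ := G.restrict s)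
            (f := fun θ => Psi ((a - θ) / σ) - Psi ((b - θ) / σ))
    _ ≤ ∫ θ in s, C / σ * |a - b| ∂G := by
        apply setIntegral_mono
        · exact (((psi_integrable hσ a).integrableOn).sub
            ((psi_integrable hσ b).integrableOn)).abs
        · exact integrableOn_const
        · intro θ
          have := Psi_lipschitz ((a - θ) / σ) ((b - θ) / σ)
          have he : (a - θ) / σ - (b - θ) / σ = (a - b) / σ := by field_simp; ring
          rw [he, abs_div, abs_of_pos hσ] at this
          calc |Psi ((a - θ) / σ) - Psi ((b - θ) / σ)| ≤ C * (|a - b| / σ) := this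
            _ = C / σ * |a - b| := by ring
    _ ≤ K * |a - b| := by
        rw [setIntegral_const, smul_eq_mul, hK]
        have h2 : (G s).toReal ≤ (G univ).toReal :=
          ENNReal.toReal_mono (measure_ne_top _ _) (measure_mono (subset_univ s))
        calc (G s).toReal * (C / σ * |a - b|)
            ≤ (G univ).toReal * (C / σ * |a - b|) :=
              mul_le_mul_of_nonneg_right h2 (by positivity)
          _ = C / σ * (G univ).toReal * |a - b| := by ring

lemma psi_integral_tendsto_atTop (hσ : 0 < σ) (s : Set ℝ) :
    Tendsto (fun t => ∫ θ in s, Psi ((t - θ) / σ) ∂G) atTop (nhds 0) := by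
  have h0 : (0:ℝ) = ∫ θ in s, (0:ℝ) ∂G := by simp
  rw [h0]
  apply tendsto_integral_filter_of_dominated_convergence (bound := fun _ => (1:ℝ))
  · exact Eventually.of_forall fun t =>
      (Psi_continuous.comp (by fun_prop)).aestronglyMeasurable
  · refine Eventually.of_forall fun t => ae_of_all _ fun θ => ?_
    rw [Real.norm_eq_abs, abs_of_pos (Psi_pos _)]; exact Psi_le_one _
  · exact integrable_const _
  · refine ae_of_all _ fun θ => ?_
    apply Psi_tendsto_atTop.comp
    apply Tendsto.atTop_div_const hσ
    exact tendsto_atTop_add_const_right atTop (-θ) tendsto_id |>.congr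
      (fun t => by simp [sub_eq_add_neg])

lemma psi_integral_tendsto_atBot (hσ : 0 < σ) (s : Set ℝ) :
    Tendsto (fun t => ∫ θ in s, Psi ((t - θ) / σ) ∂G) atBot (nhds (G s).toReal) := by
  have h0 : (G s).toReal = ∫ θ in s, (1:ℝ) ∂G := by
    simp [Measure.restrict_apply_univ]; rfl
  rw [h0]
  apply tendsto_integral_filter_of_dominated_convergence (bound := fun _ => (1:ℝ))
  · exact Eventually.of_forall fun t =>
      (Psi_continuous.comp (by fun_prop)).aestronglyMeasurable
  · refine Eventually.of_forall fun t => ae_of_all _ fun θ => ?_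
    rw [Real.norm_eq_abs, abs_of_pos (Psi_pos _)]; exact Psi_le_one _
  · exact integrable_const _
  · refine ae_of_all _ fun θ => ?_
    apply Psi_tendsto_atBot.comp
    apply Tendsto.atBot_div_const hσ
    exact tendsto_atBot_add_const_right atBot (-θ) tendsto_id |>.congr
      (fun t => by simp [sub_eq_add_neg])

end Aux

set_option maxHeartbeats 2000000 in
/-- Proposition 1 (optimal selection with homogeneous variance): the thresholds
`t₁* = inf {t : F t ≤ γ R t}` and `t₂* = inf {t : R t ≤ α}` are finite (the defining sets
are nonempty and bounded below), the threshold `t* = max(t₁*, t₂*)` satisfies the capacity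
constraint and the marginal FDR constraint, and it maximizes the probability of true
discoveries among all thresholds satisfying both constraints. -/
theorem optimal_selection_homogeneous_variance
    (G : Measure ℝ) [IsProbabilityMeasure G] (σ : ℝ) (hσ : 0 < σ)
    (α γ : ℝ) (hα : α ∈ Ioo (0:ℝ) 1) (hγ : γ ∈ Ioo (0:ℝ) 1) (hγα : γ < 1 - α)
    (c : ℝ) (hc : G (Ici c) = ENNReal.ofReal α)
    (R F B : ℝ → ℝ)
    (hR : ∀ t, R t = ∫ θ, (1 - stdPhi ((t - θ) / σ)) ∂G)
    (hF : ∀ t, F t = ∫ θ in Iio c, (1 - stdPhi ((t - θ) / σ)) ∂G)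
    (hB : ∀ t, B t = ∫ θ in Ici c, (1 - stdPhi ((t - θ) / σ)) ∂G) :
    ({t : ℝ | F t ≤ γ * R t}.Nonempty ∧ BddBelow {t : ℝ | F t ≤ γ * R t}) ∧
    ({t : ℝ | R t ≤ α}.Nonempty ∧ BddBelow {t : ℝ | R t ≤ α}) ∧
    (F (max (sInf {t : ℝ | F t ≤ γ * R t}) (sInf {t : ℝ | R t ≤ α})) ≤
        γ * R (max (sInf {t : ℝ | F t ≤ γ * R t}) (sInf {t : ℝ | R t ≤ α}))) ∧
    (R (max (sInf {t : ℝ | F t ≤ γ * R t}) (sInf {t : ℝ | R t ≤ α})) ≤ α) ∧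
    (∀ t : ℝ, F t ≤ γ * R t → R t ≤ α →
      B t ≤ B (max (sInf {t : ℝ | F t ≤ γ * R t}) (sInf {t : ℝ | R t ≤ α}))) := by
  obtain ⟨hα0, hα1⟩ := hα
  obtain ⟨hγ0, hγ1⟩ := hγ
  have hR' : R = fun t => ∫ θ in univ, Psi ((t - θ) / σ) ∂G := by
    funext t; rw [hR, ← setIntegral_univ]; congr 1 with θ; rw [one_sub_stdPhi]
  have hF' : F = fun t => ∫ θ in Iio c, Psi ((t - θ) / σ) ∂G := by
    funext t; rw [hF]; congr 1 with θ; rw [one_sub_stdPhi]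
  have hB' : B = fun t => ∫ θ in Ici c, Psi ((t - θ) / σ) ∂G := by
    funext t; rw [hB]; congr 1 with θ; rw [one_sub_stdPhi]
  have hGc : (G (Ici c)).toReal = α := by rw [hc, ENNReal.toReal_ofReal hα0.le]
  have hGc' : (G (Iio c)).toReal = 1 - α := by
    have h := measure_compl (measurableSet_Ici (a := c)) (measure_ne_top G _)
    rw [compl_Ici] at h
    rw [h, measure_univ, hc, ENNReal.toReal_sub_of_le (by
      simpa using ENNReal.ofReal_le_one.2 hα1.le) (by simp)]
    simp [ENNReal.toReal_ofReal hα0.le]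
  have hRanti : Antitone R := by rw [hR']; exact psi_integral_antitone hσ univ
  have hFanti : Antitone F := by rw [hF']; exact psi_integral_antitone hσ (Iio c)
  have hBanti : Antitone B := by rw [hB']; exact psi_integral_antitone hσ (Ici c)
  have hRcont : Continuous R := by rw [hR']; exact psi_integral_continuous hσ univ
  have hFcont : Continuous F := by rw [hF']; exact psi_integral_continuous hσ (Iio c)
  have hRtop : Tendsto R atTop (nhds 0) := by rw [hR']; exact psi_integral_tendsto_atTop hσ univ
  have hRbot : Tendsto R atBot (nhds 1) := by
    have := psi_integral_tendsto_atBot (G := G) hσ univ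
    rw [measure_univ] at this
    rw [hR']; exact this
  have hFbot : Tendsto F atBot (nhds (1 - α)) := by
    have := psi_integral_tendsto_atBot (G := G) hσ (Iio c)
    rw [hGc'] at this
    rw [hF']; exact this
  have hRFB : ∀ t, R t = F t + B t := by
    intro t
    simp only [hR', hF', hB']
    rw [← setIntegral_union (Iio_disjoint_Ici le_rfl) measurableSet_Ici
      ((psi_integrable hσ t).integrableOn) ((psi_integrable hσ t).integrableOn), Iio_union_Ici]
  have hFnonneg : ∀ t, 0 ≤ F t := fun t => by
    simp only [hF']; exact setIntegral_nonneg measurableSet_Iio fun θ _ => (Psi_pos _).le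
  have hBge : ∀ t, α * Psi ((t - c) / σ) ≤ B t := by
    intro t
    simp only [hB']
    have h1 : ∫ θ in Ici c, Psi ((t - c) / σ) ∂G ≤ ∫ θ in Ici c, Psi ((t - θ) / σ) ∂G := by
      apply setIntegral_mono_on (integrableOn_const)
        ((psi_integrable hσ t).integrableOn) measurableSet_Ici
      intro θ hθ
      exact Psi_antitone (by have h' : c ≤ θ := hθ; gcongr)
    rw [setIntegral_const, smul_eq_mul, measureReal_def, hGc] at h1
    exact h1
  have hBpos : ∀ t, 0 < B t := fun t =>
    lt_of_lt_of_le (mul_pos hα0 (Psi_pos _)) (hBge t)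
  -- S₂ nonempty and bounded below
  have hS₂ne : {t : ℝ | R t ≤ α}.Nonempty := by
    obtain ⟨t, ht⟩ := (hRtop.eventually_lt_const hα0).exists
    exact ⟨t, ht.le⟩
  have hS₂bdd : BddBelow {t : ℝ | R t ≤ α} := by
    obtain ⟨t₀, ht₀⟩ := eventually_atBot.1 (hRbot.eventually_const_lt hα1)
    refine ⟨t₀, fun x hx => ?_⟩
    by_contra h
    push_neg at h
    exact absurd hx (not_le.2 (ht₀ x h.le))
  -- S₁ bounded below
  have hS₁bdd : BddBelow {t : ℝ | F t ≤ γ * R t} := by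
    have hlim : Tendsto (fun t => F t - γ * R t) atBot (nhds (1 - α - γ * 1)) :=
      hFbot.sub ((hRbot.const_mul γ))
    obtain ⟨t₀, ht₀⟩ := eventually_atBot.1 (hlim.eventually_const_lt (show (0:ℝ) < 1 - α - γ * 1 by nlinarith))
    refine ⟨t₀, fun x hx => ?_⟩
    by_contra h
    push_neg at h
    have := ht₀ x h.le
    simp only [mem_setOf_eq] at hx
    linarith
  -- S₁ nonempty
  have hS₁ne : {t : ℝ | F t ≤ γ * R t}.Nonempty := by
    set ε := α * γ / 2 with hε
    have hε0 : 0 < ε := by positivity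
    -- choose c' < c with small mass on [c', c)
    obtain ⟨n, hn⟩ : ∃ n : ℕ, G (Ico (c - 1 / (n + 1)) c) < ENNReal.ofReal ε := by
      have hanti : Antitone (fun n : ℕ => Ico (c - 1 / (n + 1 : ℝ)) c) := by
        intro m n hmn
        apply Ico_subset_Ico_left
        have h1 : (0:ℝ) < (m:ℝ) + 1 := by positivity
        have h2 : ((m:ℝ) + 1) ≤ (n:ℝ) + 1 := by exact_mod_cast Nat.succ_le_succ hmn
        have := one_div_le_one_div_of_le h1 h2
        linarith
      have hempty : ⋂ n : ℕ, Ico (c - 1 / (n + 1 : ℝ)) c = ∅ := by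
        ext θ
        simp only [mem_iInter, mem_Ico, mem_empty_iff_false, iff_false, not_forall]
        by_contra h
        push_neg at h
        obtain ⟨n, hn⟩ := exists_nat_one_div_lt (show (0:ℝ) < c - θ by linarith [(h 0).2])
        exact absurd ((h n).1) (by push_neg; linarith)
      have hlim := tendsto_measure_iInter_atTop (μ := G)
        (fun n : ℕ => (measurableSet_Ico :
          MeasurableSet (Ico (c - 1 / (n + 1 : ℝ)) c)).nullMeasurableSet)
        hanti ⟨0, measure_ne_top _ _⟩
      rw [hempty, measure_empty] at hlim
      exact (hlim.eventually_lt_const (show (0:ENNReal) < ENNReal.ofReal ε by simp [hε0])).exists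
    set c' := c - 1 / (n + 1 : ℝ) with hc'
    have hc'lt : c' < c := by
      have : (0:ℝ) < 1 / (n + 1) := by positivity
      simp only [hc']; linarith
    have hmass : (G (Ico c' c)).toReal ≤ ε := ENNReal.toReal_le_of_le_ofReal hε0.le hn.le
    set d := (c - c') / σ with hd
    have hd0 : 0 < d := div_pos (by linarith) hσ
    set t := c + σ * (max 0 (- Real.log ε) / d) with ht
    have hx0 : 0 ≤ (t - c) / σ := by
      rw [ht]
      have : (c + σ * (max 0 (- Real.log ε) / d) - c) / σ = max 0 (- Real.log ε) / d := by
        field_simp; ring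
      rw [this]
      positivity
    have hxd : (t - c) / σ * d = max 0 (- Real.log ε) := by
      rw [ht]
      field_simp; ring
    have hexp : Real.exp (-((t - c) / σ * d) - d ^ 2 / 2) ≤ ε := by
      rw [← Real.exp_log hε0]
      apply Real.exp_le_exp.2
      have h1 : - Real.log ε ≤ max 0 (- Real.log ε) := le_max_right _ _
      nlinarith [sq_nonneg d, hxd]
    have hshift : Psi ((t - c') / σ) ≤ ε * Psi ((t - c) / σ) := by
      have he : (t - c') / σ = (t - c) / σ + d := by rw [hd]; field_simp; ring
      rw [he]
      calc Psi ((t - c) / σ + d)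
          ≤ Real.exp (-((t - c) / σ * d) - d ^ 2 / 2) * Psi ((t - c) / σ) :=
            Psi_shift_le hd0.le
        _ ≤ ε * Psi ((t - c) / σ) :=
            mul_le_mul_of_nonneg_right hexp (Psi_pos _).le
    -- bound F t
    have hFt : F t ≤ Psi ((t - c') / σ) + ε * Psi ((t - c) / σ) := by
      simp only [hF']
      have hsplit : (∫ θ in Iio c, Psi ((t - θ) / σ) ∂G)
          = (∫ θ in Iio c', Psi ((t - θ) / σ) ∂G) + ∫ θ in Ico c' c, Psi ((t - θ) / σ) ∂G := by
        rw [← setIntegral_union (by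
            apply Set.disjoint_left.2
            intro x hx hx2
            exact absurd hx2.1 (not_le.2 hx))
          measurableSet_Ico ((psi_integrable hσ t).integrableOn)
          ((psi_integrable hσ t).integrableOn), Iio_union_Ico_eq_Iio hc'lt.le]
      rw [hsplit]
      have h1 : (∫ θ in Iio c', Psi ((t - θ) / σ) ∂G) ≤ Psi ((t - c') / σ) := by
        calc (∫ θ in Iio c', Psi ((t - θ) / σ) ∂G)
            ≤ ∫ _ in Iio c', Psi ((t - c') / σ) ∂G := by
              apply setIntegral_mono_on ((psi_integrable hσ t).integrableOn)
                (integrableOn_const) measurableSet_Iio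
              intro θ hθ
              exact Psi_antitone (by have h' : θ ≤ c' := le_of_lt hθ; gcongr)
          _ = (G (Iio c')).toReal * Psi ((t - c') / σ) := by
              rw [setIntegral_const, smul_eq_mul, measureReal_def]
          _ ≤ 1 * Psi ((t - c') / σ) := by
              apply mul_le_mul_of_nonneg_right _ (Psi_pos _).le
              exact (ENNReal.toReal_le_of_le_ofReal zero_le_one (by
                simpa using prob_le_one (μ := G) (s := Iio c')))
          _ = Psi ((t - c') / σ) := one_mul _
      have h2 : (∫ θ in Ico c' c, Psi ((t - θ) / σ) ∂G) ≤ ε * Psi ((t - c) / σ) := by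
        calc (∫ θ in Ico c' c, Psi ((t - θ) / σ) ∂G)
            ≤ ∫ _ in Ico c' c, Psi ((t - c) / σ) ∂G := by
              apply setIntegral_mono_on ((psi_integrable hσ t).integrableOn)
                (integrableOn_const) measurableSet_Ico
              intro θ hθ
              exact Psi_antitone (by have h' : θ ≤ c := hθ.2.le; gcongr)
          _ = (G (Ico c' c)).toReal * Psi ((t - c) / σ) := by
              rw [setIntegral_const, smul_eq_mul, measureReal_def]
          _ ≤ ε * Psi ((t - c) / σ) := mul_le_mul_of_nonneg_right hmass (Psi_pos _).le
      linarith
    refine ⟨t, ?_⟩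
    have hBt := hBge t
    have hRt := hRFB t
    have hFt' : F t ≤ α * γ * Psi ((t - c) / σ) := by
      have := add_le_add hshift (le_refl (ε * Psi ((t - c) / σ)))
      calc F t ≤ Psi ((t - c') / σ) + ε * Psi ((t - c) / σ) := hFt
        _ ≤ ε * Psi ((t - c) / σ) + ε * Psi ((t - c) / σ) := by linarith [hshift]
        _ = α * γ * Psi ((t - c) / σ) := by rw [hε]; ring
    show F t ≤ γ * R t
    have hγF : 0 ≤ γ * F t := mul_nonneg hγ0.le (hFnonneg t)
    calc F t ≤ α * γ * Psi ((t - c) / σ) := hFt'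
      _ = γ * (α * Psi ((t - c) / σ)) := by ring
      _ ≤ γ * B t := mul_le_mul_of_nonneg_left hBt hγ0.le
      _ ≤ γ * R t := by rw [hRt, mul_add]; linarith
  -- upward closedness of the FDR constraint
  have hup : ∀ s t : ℝ, s ≤ t → F s ≤ γ * R s → F t ≤ γ * R t := by
    intro s t hst hs
    have hd : 0 ≤ (t - s) / σ := div_nonneg (by linarith) hσ.le
    set ρ := Psi ((t - c) / σ) / Psi ((s - c) / σ) with hρ
    have hρ0 : 0 ≤ ρ := div_nonneg (Psi_pos _).le (Psi_pos _).le
    have e1 : (s - c) / σ + (t - s) / σ = (t - c) / σ := by field_simp; ring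
    have hF_t : F t ≤ ρ * F s := by
      simp only [hF']
      rw [← integral_const_mul]
      apply setIntegral_mono_on ((psi_integrable hσ t).integrableOn)
        (((psi_integrable hσ s).const_mul ρ).integrableOn) measurableSet_Iio
      intro θ hθ
      have h2 := Psi_TP2 (x := (s - c) / σ) (x' := (s - θ) / σ) (d := (t - s) / σ)
        (by have h' : θ ≤ c := le_of_lt hθ; gcongr) hd
      have e2 : (s - θ) / σ + (t - s) / σ = (t - θ) / σ := by field_simp; ring
      rw [e1, e2] at h2
      rw [hρ, div_mul_eq_mul_div, le_div_iff₀ (Psi_pos _)]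
      nlinarith [h2]
    have hB_t : ρ * B s ≤ B t := by
      simp only [hB']
      rw [← integral_const_mul]
      apply setIntegral_mono_on (((psi_integrable hσ s).const_mul ρ).integrableOn)
        ((psi_integrable hσ t).integrableOn) measurableSet_Ici
      intro θ hθ
      have h2 := Psi_TP2 (x := (s - θ) / σ) (x' := (s - c) / σ) (d := (t - s) / σ)
        (by have h' : c ≤ θ := hθ; gcongr) hd
      have e2 : (s - θ) / σ + (t - s) / σ = (t - θ) / σ := by field_simp; ring
      rw [e1, e2] at h2
      rw [hρ, div_mul_eq_mul_div, div_le_iff₀ (Psi_pos _)]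
      nlinarith [h2]
    have hrs := hRFB s
    rw [hrs, mul_add] at hs
    have h1 : (1 - γ) * F s ≤ γ * B s := by nlinarith [hs]
    have h2 : (1 - γ) * F t ≤ γ * B t := by
      nlinarith [mul_le_mul_of_nonneg_left hF_t (by linarith : (0:ℝ) ≤ 1 - γ),
        mul_le_mul_of_nonneg_left h1 hρ0,
        mul_le_mul_of_nonneg_left hB_t hγ0.le]
    rw [hRFB t, mul_add]
    nlinarith [h2]
  -- closedness and membership of infima
  have hS₁closed : IsClosed {t : ℝ | F t ≤ γ * R t} :=
    isClosed_le hFcont (continuous_const.mul hRcont)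
  have hS₂closed : IsClosed {t : ℝ | R t ≤ α} := isClosed_le hRcont continuous_const
  have ht₁mem : sInf {t : ℝ | F t ≤ γ * R t} ∈ {t : ℝ | F t ≤ γ * R t} :=
    hS₁closed.csInf_mem hS₁ne hS₁bdd
  have ht₂mem : sInf {t : ℝ | R t ≤ α} ∈ {t : ℝ | R t ≤ α} :=
    hS₂closed.csInf_mem hS₂ne hS₂bdd
  set t₁ := sInf {t : ℝ | F t ≤ γ * R t}
  set t₂ := sInf {t : ℝ | R t ≤ α}
  refine ⟨⟨hS₁ne, hS₁bdd⟩, ⟨hS₂ne, hS₂bdd⟩, ?_, ?_, ?_⟩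
  · exact hup t₁ (max t₁ t₂) (le_max_left _ _) ht₁mem
  · exact le_trans (hRanti (le_max_right t₁ t₂)) ht₂mem
  · intro t h1 h2
    have ht1 : t₁ ≤ t := csInf_le hS₁bdd h1
    have ht2 : t₂ ≤ t := csInf_le hS₂bdd h2
    exact hBanti (max_le ht1 ht2)
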